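/- arXiv:math/0405280 — 2 statements merged into one kernel-verified Lean document; each statement's English description precedes it below -/
import Mathlib

section
/- An orbit in a rhombus that passes through the center of the rhombus is centrally symmetric: if the billiard orbit (q(t)) in the rhombus satisfies q(0) = center, then q(−t) is the image of q(t) under the point reflection through the center, for all t for which the orbit is defined. Consequently, any periodic beam whose central orbit passes through the center of a rhombus has a palindromic code. -/
/-!
Both time reversal and the point reflection `x ↦ a - x` negate the velocity at time `0`,
and both fix the position at time `0` when `q 0` is the fixed point of the reflection.
By uniqueness of trajectories with given initial data the two images of `q` coincide.
-/

theorem comp_neg_eq_sub_of_apply_zero {E : Type*} [NormedAddCommGroup E] [NormedSpace ℝ E]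
    {Traj : (ℝ → E) → Prop} (a : E)
    (hrev : ∀ q, Traj q → Traj (fun t => q (-t)))
    (hsym : ∀ q, Traj q → Traj (fun t => a - q t))
    (huniq : ∀ q₁ q₂, Traj q₁ → Traj q₂ → q₁ 0 = q₂ 0 → deriv q₁ 0 = deriv q₂ 0 → q₁ = q₂)
    {q : ℝ → E} (hq : Traj q) (h0 : q 0 = a - q 0) :
    (fun t => q (-t)) = fun t => a - q t := by
  refine huniq _ _ (hrev q hq) (hsym q hq) (by simpa using h0) ?_
  rw [deriv_comp_neg, deriv_const_sub, neg_zero]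

theorem code_apply_neg_of_comp_neg_eq_sub {E : Type*} [Sub E] {Traj : (ℝ → E) → Prop} (a : E)
    (code : (ℝ → E) → ℤ → ℤ)
    (hcsym : ∀ r, Traj r → code (fun t => a - r t) = code r)
    (hcrev : ∀ r, Traj r → ∀ n : ℤ, code (fun t => r (-t)) n = code r (-n))
    {q : ℝ → E} (hq : Traj q) (hsymm : (fun t => q (-t)) = fun t => a - q t) (n : ℤ) :
    code q n = code q (-n) := by
  rw [← hcrev q hq, hsymm, hcsym q hq]

theorem stmt11_general (Traj : (ℝ → ℂ) → Prop) (c : ℂ)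
    (hrev : ∀ q, Traj q → Traj (fun t => q (-t)))
    (hsym : ∀ q, Traj q → Traj (fun t => 2 * c - q t))
    (huniq : ∀ q₁ q₂, Traj q₁ → Traj q₂ → q₁ 0 = q₂ 0 →
      deriv q₁ 0 = deriv q₂ 0 → q₁ = q₂)
    (q : ℝ → ℂ) (hq : Traj q) (h0 : q 0 = c) :
    (∀ t : ℝ, q (-t) = 2 * c - q t) ∧
    (∀ code : (ℝ → ℂ) → ℤ → ℤ,
      (∀ r, Traj r → code (fun t => 2 * c - r t) = code r) →
      (∀ r, Traj r → ∀ n : ℤ, code (fun t => r (-t)) n = code r (-n)) →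
      ∀ n : ℤ, code q n = code q (-n)) := by
  have hfix : q 0 = 2 * c - q 0 := by rw [h0]; ring
  have hsymm := comp_neg_eq_sub_of_apply_zero (2 * c) hrev hsym huniq hq hfix
  exact ⟨congrFun hsymm, fun code hcsym hcrev =>
    code_apply_neg_of_comp_neg_eq_sub (2 * c) code hcsym hcrev hq hsymm⟩

/-- an orbit in a rhombus passing through the center of the rhombus is
centrally symmetric.  Here `Traj` is the predicate "is a (nonsingular) billiard
trajectory in the rhombus", `c` is the center of the rhombus, and the hypotheses record
that: billiard trajectories form a time-translation and time-reversal invariant family;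
the point reflection through the center maps trajectories to trajectories (the rhombus is
centrally symmetric); and a trajectory is uniquely determined by its position and
velocity at time 0.  Conclusion: if `q 0 = c` then `q (−t)` is the image of `q t` under
the point reflection through `c` for all `t`.  Consequently, for any coding of
trajectories by the labelled rhombi visited in the unfolding which is invariant under the
central symmetry and reversed by time reversal, the code of such an orbit (hence of any
periodic beam whose central orbit passes through the center) is palindromic:
`code q n = code q (−n)`. -/
theorem stmt11 (Traj : (ℝ → ℂ) → Prop) (c : ℂ)
    (htrans : ∀ q s, Traj q → Traj (fun t => q (t + s)))
    (hrev : ∀ q, Traj q → Traj (fun t => q (-t)))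
    (hsym : ∀ q, Traj q → Traj (fun t => 2 * c - q t))
    (huniq : ∀ q₁ q₂, Traj q₁ → Traj q₂ → q₁ 0 = q₂ 0 →
      deriv q₁ 0 = deriv q₂ 0 → q₁ = q₂)
    (q : ℝ → ℂ) (hq : Traj q) (h0 : q 0 = c) :
    (∀ t : ℝ, q (-t) = 2 * c - q t) ∧
    (∀ code : (ℝ → ℂ) → ℤ → ℤ,
      (∀ r, Traj r → code (fun t => 2 * c - r t) = code r) →
      (∀ r, Traj r → ∀ n : ℤ, code (fun t => r (-t)) n = code r (-n)) →
      ∀ n : ℤ, code q n = code q (-n)) :=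
  stmt11_general Traj c hrev hsym huniq q hq h0
end

section
/- For an irrational right triangle with smaller angle α satisfying π/6 < α < π/4, the perpendicular billiard orbit starting at the left endpoint of the horizontal diagonal L of the associated rhombus has symbolic code 010 and returns to L perpendicularly at an interior point of L without hitting any vertex in between; hence it is a simple periodic loop. -/
/-! Reflecting across the side `AB` and then across the image of the opposite side `CD`, which
is parallel to `AB`, is a translation, here by `2a(e^{2iα} - 1)`. Since the first reflection is
an involution, membership of the vertical ray in the two unfolded copies reduces to explicit
points lying in the rhombus; the resulting inequalities hold because `0 < cos 2α < 1/2`,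
which is `π/6 < α < π/4`. -/

open Complex

/-- Reflection of the plane (identified with ℂ) across the line through the two distinct
points `u` and `v`. -/
noncomputable def reflLine (u v : ℂ) : ℂ → ℂ :=
  fun z => u + ((v - u) / (starRingEnd ℂ) (v - u)) * (starRingEnd ℂ) (z - u)

open ComplexConjugate

section Reflection

variable {u v : ℂ}

theorem reflLine_self_left : reflLine u v u = u := by
  simp [reflLine]

theorem div_conj_mul_conj_div_conj {d : ℂ} (hd : d ≠ 0) :
    d / conj d * conj (d / conj d) = 1 := by
  have hd' : conj d ≠ 0 := (map_ne_zero _).2 hd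
  rw [map_div₀, conj_conj]
  field_simp

theorem reflLine_reflLine (h : u ≠ v) (z : ℂ) : reflLine u v (reflLine u v z) = z := by
  have hK := div_conj_mul_conj_div_conj (sub_ne_zero.2 h.symm)
  rw [reflLine, reflLine, add_sub_cancel_left, map_mul, conj_conj]
  linear_combination (z - u) * hK

theorem reflLine_comp_reflLine_of_parallel {u' v' : ℂ} (h : u ≠ v) {k : ℝ} (hk : k ≠ 0)
    (h' : v' - u' = k * (v - u)) : ∃ t, ∀ z, reflLine u' v' (reflLine u v z) = z + t := by
  have hK : (v' - u') / conj (v' - u') = (v - u) / conj (v - u) := by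
    rw [h', map_mul, conj_ofReal, mul_div_mul_left _ _ (ofReal_ne_zero.2 hk)]
  have hKK := div_conj_mul_conj_div_conj (sub_ne_zero.2 h.symm)
  refine ⟨u' - u - (v - u) / conj (v - u) * conj (u' - u), fun z => ?_⟩
  simp only [reflLine, hK]
  generalize (v - u) / conj (v - u) = K at hKK ⊢
  simp only [map_add, map_sub, map_mul, conj_conj]
  linear_combination (z - u) * hKK

theorem reflLine_mem_openSegment {x y z : ℂ} (hz : z ∈ openSegment ℝ x y) :
    reflLine u v z ∈ openSegment ℝ (reflLine u v x) (reflLine u v y) := by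
  obtain ⟨p, q, hp, hq, hpq, rfl⟩ := hz
  refine ⟨p, q, hp, hq, hpq, ?_⟩
  have hpq' : (p : ℂ) + q = 1 := by exact_mod_cast hpq
  simp only [reflLine, real_smul]
  generalize (v - u) / conj (v - u) = K
  simp only [map_add, map_sub, map_mul, conj_ofReal]
  linear_combination (u - K * conj u) * hpq'

end Reflection

def rhombusInterior (a b : ℝ) : Set ℂ := {z | |z.re| / a + |z.im| / b < 1}

theorem ofReal_add_ofReal_mul_I_mem_rhombusInterior_iff {a b : ℝ} (x y : ℝ) :
    (x + y * I : ℂ) ∈ rhombusInterior a b ↔ |x| / a + |y| / b < 1 := by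
  simp [rhombusInterior]

section Rhombus

variable {a b c s : ℝ}

theorem neg_ofReal_ne_ofReal_mul_I (ha : a ≠ 0) : -(a : ℂ) ≠ b * I :=
  fun h => ha (by simpa using congrArg re h)

/- The hypotheses `a * c + b * s = a` and `a * s - b * c = b` say `c + s i = (a + b i) / (a - b i)`,
which is `e^{2iα}` when `b = a tan α`. -/

theorem mul_sub_mul_I_eq_add_mul_I (hre : a * c + b * s = a) (him : a * s - b * c = b) :
    ((c : ℂ) + s * I) * (a - b * I) = a + b * I := by
  apply Complex.ext <;> simp <;> linarith

theorem reflLine_sideAB_apply (ha : a ≠ 0) (hre : a * c + b * s = a) (him : a * s - b * c = b)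
    (z : ℂ) : reflLine (-(a : ℂ)) (b * I) z = -a + (c + s * I) * (conj z + a) := by
  have hw : (a : ℂ) - b * I ≠ 0 := fun h => ha (by simpa using congrArg re h)
  have hK : ((b : ℂ) * I - -a) / conj ((b : ℂ) * I - -a) = c + s * I := by
    have hconj : conj ((b : ℂ) * I - -a) = a - b * I := by
      simp only [map_sub, map_neg, map_mul, conj_ofReal, conj_I]
      ring
    rw [hconj, div_eq_iff hw, mul_sub_mul_I_eq_add_mul_I hre him]
    ring
  simp only [reflLine]
  rw [hK, map_sub, map_neg, conj_ofReal, sub_neg_eq_add]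

theorem reflLine_sideAB_vertical (ha : a ≠ 0) (hre : a * c + b * s = a)
    (him : a * s - b * c = b) (t : ℝ) :
    reflLine (-(a : ℂ)) (b * I) (-a + t * I)
      = ((-a + s * t : ℝ) : ℂ) + ((-(c * t) : ℝ) : ℂ) * I := by
  rw [reflLine_sideAB_apply ha hre him]
  simp only [map_add, map_neg, map_mul, conj_ofReal, conj_I]
  push_cast
  linear_combination (-(s * t : ℂ)) * I_sq

theorem reflLine_sideAB_vertical_mem_rhombusInterior (ha : 0 < a) (hb : 0 < b) (hc : 0 < c)
    (hc' : 2 * c < 1) (hre : a * c + b * s = a) (him : a * s - b * c = b) {t : ℝ}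
    (ht : t ∈ Set.Ioo 0 (2 * b)) :
    reflLine (-(a : ℂ)) (b * I) (-a + t * I) ∈ rhombusInterior a b := by
  obtain ⟨ht0, ht1⟩ := ht
  rw [reflLine_sideAB_vertical ha.ne' hre him, ofReal_add_ofReal_mul_I_mem_rhombusInterior_iff,
    abs_neg, abs_of_pos (by positivity : 0 < c * t), div_add_div _ _ ha.ne' hb.ne',
    div_lt_one (by positivity)]
  rcases abs_cases (-a + s * t) with ⟨h, _⟩ | ⟨h, _⟩ <;> rw [h]
  · nlinarith [mul_lt_mul_of_pos_left ht1 ha]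
  · nlinarith [mul_pos ht0 (mul_pos ha (by linarith : 0 < 1 - 2 * c))]

theorem reflLine_sideAB_vertical_mem_openSegment (ha : a ≠ 0) (hc : 0 < c) (hc' : 2 * c < 1)
    (hre : a * c + b * s = a) (him : a * s - b * c = b) :
    reflLine (-(a : ℂ)) (b * I) (-a + ((2 * b : ℝ) : ℂ) * I)
      ∈ openSegment ℝ (a : ℂ) (-(b * I)) := by
  refine ⟨1 - 2 * c, 2 * c, by linarith, by linarith, by ring, ?_⟩
  have hreC : (a : ℂ) * c + b * s = a := by exact_mod_cast hre
  rw [reflLine_sideAB_vertical ha hre him]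
  simp only [real_smul]
  push_cast
  linear_combination (-2 : ℂ) * hreC

theorem reflLine_sideAB_sub (ha : a ≠ 0) (hre : a * c + b * s = a) (him : a * s - b * c = b) :
    reflLine (-(a : ℂ)) (b * I) (-(b * I)) - reflLine (-(a : ℂ)) (b * I) a
      = ((-1 : ℝ) : ℂ) * (b * I - -a) := by
  rw [reflLine_sideAB_apply ha hre him, reflLine_sideAB_apply ha hre him]
  simp only [map_neg, map_mul, conj_ofReal, conj_I]
  push_cast
  linear_combination -mul_sub_mul_I_eq_add_mul_I hre him

theorem reflLine_comp_reflLine_sideAB (ha : a ≠ 0) (hre : a * c + b * s = a)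
    (him : a * s - b * c = b) (z : ℂ) :
    reflLine (reflLine (-(a : ℂ)) (b * I) a) (reflLine (-(a : ℂ)) (b * I) (-(b * I)))
      (reflLine (-(a : ℂ)) (b * I) z) = z + (2 * a * (c - 1) + 2 * a * s * I) := by
  obtain ⟨v, hv⟩ := reflLine_comp_reflLine_of_parallel (neg_ofReal_ne_ofReal_mul_I ha)
    (by norm_num) (reflLine_sideAB_sub ha hre him)
  have hva : v = reflLine (-(a : ℂ)) (b * I) a - a := by
    have := hv a
    rw [reflLine_self_left] at this
    linear_combination -this
  rw [hv, hva, reflLine_sideAB_apply ha hre him, conj_ofReal]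
  ring

theorem vertical_sub_translation_mem_rhombusInterior (ha : 0 < a) (hb : 0 < b)
    (hc' : 2 * c < 1) (him : a * s - b * c = b) {t : ℝ} (ht : t ∈ Set.Ioo (2 * b) (2 * a * s)) :
    -(a : ℂ) + t * I - (2 * a * (c - 1) + 2 * a * s * I) ∈ rhombusInterior a b := by
  obtain ⟨ht0, ht1⟩ := ht
  have hp : -(a : ℂ) + t * I - (2 * a * (c - 1) + 2 * a * s * I)
      = ((a - 2 * a * c : ℝ) : ℂ) + ((t - 2 * a * s : ℝ) : ℂ) * I := by
    push_cast; ring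
  rw [hp, ofReal_add_ofReal_mul_I_mem_rhombusInterior_iff, abs_of_pos (by nlinarith),
    abs_of_neg (by linarith), div_add_div _ _ ha.ne' hb.ne', div_lt_one (by positivity)]
  nlinarith [mul_lt_mul_of_pos_left ht0 ha]

theorem vertical_mem_openSegment_add_translation (hc : 0 < c) (hc' : 2 * c < 1) :
    -(a : ℂ) + ((2 * a * s : ℝ) : ℂ) * I ∈ openSegment ℝ
      (-a + (2 * a * (c - 1) + 2 * a * s * I)) (a + (2 * a * (c - 1) + 2 * a * s * I)) := by
  refine ⟨c, 1 - c, hc, by linarith, by ring, ?_⟩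
  simp only [real_smul]
  push_cast
  ring

end Rhombus

theorem Real.cos_two_mul_add_tan_mul_sin_two_mul {α : ℝ} (h : Real.cos α ≠ 0) :
    Real.cos (2 * α) + Real.tan α * Real.sin (2 * α) = 1 := by
  rw [Real.cos_two_mul, Real.sin_two_mul, Real.tan_eq_sin_div_cos]
  field_simp
  linear_combination 2 * Real.sin_sq_add_cos_sq α

theorem Real.sin_two_mul_sub_tan_mul_cos_two_mul {α : ℝ} (h : Real.cos α ≠ 0) :
    Real.sin (2 * α) - Real.tan α * Real.cos (2 * α) = Real.tan α := by
  rw [Real.cos_two_mul, Real.sin_two_mul, Real.tan_eq_sin_div_cos]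
  field_simp
  ring

theorem Real.cos_two_mul_mem_Ioo {α : ℝ} (h₁ : Real.pi / 6 < α) (h₂ : α < Real.pi / 4) :
    0 < Real.cos (2 * α) ∧ 2 * Real.cos (2 * α) < 1 := by
  refine ⟨Real.cos_pos_of_mem_Ioo ⟨by linarith [Real.pi_pos], by linarith⟩, ?_⟩
  have := Real.cos_lt_cos_of_nonneg_of_le_pi (by positivity) (by linarith)
    (by linarith : Real.pi / 3 < 2 * α)
  rw [Real.cos_pi_div_three] at this
  linarith

/-- The unfolded orbit is the vertical ray `t ↦ A + t i`; it crosses the copies `r₁ R` (label 1)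
and `r₂ (r₁ R)` (label 0) of the rhombus `R`, whence the code `010`. -/
theorem stmt12_general (α a : ℝ) (hα : α ∈ Set.Ioo (Real.pi / 6) (Real.pi / 4))
    (ha : 0 < a) :
    ∀ b : ℝ, b = a * Real.tan α →
    ∀ A B C D : ℂ, A = -(a : ℂ) → B = (b : ℝ) * Complex.I → C = (a : ℂ) →
      D = -((b : ℝ) * Complex.I) →
    ∀ Rint : Set ℂ, Rint = {z : ℂ | |z.re| / a + |z.im| / b < 1} →
    ∀ r₁ r₂ : ℂ → ℂ, r₁ = reflLine A B → r₂ = reflLine (r₁ C) (r₁ D) →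
    (∃ v : ℂ, ∀ z : ℂ, r₂ (r₁ z) = z + v) ∧
    ∃ t₁ t₂ : ℝ, 0 < t₁ ∧ t₁ < t₂ ∧
      (∀ t ∈ Set.Ioo 0 t₁, A + (t : ℝ) * Complex.I ∈ r₁ '' Rint) ∧
      A + (t₁ : ℝ) * Complex.I ∈ openSegment ℝ (r₁ C) (r₁ D) ∧
      (∀ t ∈ Set.Ioo t₁ t₂, A + (t : ℝ) * Complex.I ∈ r₂ '' (r₁ '' Rint)) ∧
      A + (t₂ : ℝ) * Complex.I ∈ openSegment ℝ (r₂ (r₁ A)) (r₂ (r₁ C)) := by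
  intro b hb A B C D hA hB hC hD Rint hRint r₁ r₂ hr₁ hr₂
  subst hA hB hC hD hRint hr₁ hr₂
  obtain ⟨hα₁, hα₂⟩ := hα
  have hπ := Real.pi_pos
  have hcos : 0 < Real.cos α := Real.cos_pos_of_mem_Ioo ⟨by linarith, by linarith⟩
  have hb0 : 0 < b :=
    hb ▸ mul_pos ha (Real.tan_pos_of_pos_of_lt_pi_div_two (by linarith) (by linarith))
  obtain ⟨hc, hc'⟩ := Real.cos_two_mul_mem_Ioo hα₁ hα₂
  have hre : a * Real.cos (2 * α) + b * Real.sin (2 * α) = a := by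
    rw [hb]; linear_combination a * Real.cos_two_mul_add_tan_mul_sin_two_mul hcos.ne'
  have him : a * Real.sin (2 * α) - b * Real.cos (2 * α) = b := by
    rw [hb]; linear_combination a * Real.sin_two_mul_sub_tan_mul_cos_two_mul hcos.ne'
  have hAB : -(a : ℂ) ≠ b * I := neg_ofReal_ne_ofReal_mul_I ha.ne'
  have hr := reflLine_comp_reflLine_sideAB ha.ne' hre him
  refine ⟨⟨_, hr⟩, 2 * b, 2 * a * Real.sin (2 * α), by linarith, by nlinarith [mul_pos hb0 hc],
    fun t ht => ?_, ?_, fun t ht => ?_, ?_⟩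
  · exact ⟨_, reflLine_sideAB_vertical_mem_rhombusInterior ha hb0 hc hc' hre him ht,
      reflLine_reflLine hAB _⟩
  · simpa only [reflLine_reflLine hAB] using reflLine_mem_openSegment (u := -(a : ℂ)) (v := b * I)
      (reflLine_sideAB_vertical_mem_openSegment ha.ne' hc hc' hre him)
  · refine ⟨_, ⟨_, vertical_sub_translation_mem_rhombusInterior ha hb0 hc' him ht, rfl⟩, ?_⟩
    rw [hr]
    ring
  · rw [hr, hr]
    exact vertical_mem_openSegment_add_translation hc hc'

/-- let `Q` be an (irrational) right triangle with legs `a` (horizontal)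
and `b = a·tan α`, with smaller angle `α ∈ (π/6, π/4)`.  Unfolding across the legs gives
the rhombus with vertices `A = −a`, `B = ib`, `C = a`, `D = −ib`, horizontal diagonal
`L = [A, C]`, and acute angle `2α` at `A` and `C`.  The perpendicular (vertical) billiard
orbit starting at the left endpoint `A` of `L`, unfolded to the vertical ray
`t ↦ A + t·i`, crosses exactly the rhombus copies labelled `0, 1, 0` (so its symbolic
code is `010`): it passes through the interior of the copy `r₁(R)` (label 1, `r₁` the
reflection across the side `AB`), exits it through the interior of the side
`r₁(C)r₁(D)`, passes through the interior of the copy `r₂(r₁(R))` (label 0, `r₂` the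
reflection across `r₁(C)r₁(D)`), and then meets the image `r₂(r₁(L))` of `L` at an
interior point, hitting no vertex in between; moreover `r₂ ∘ r₁` is a translation, so the
unfolded vertical ray meets the image of `L` perpendicularly.  Hence the orbit returns to
`L` perpendicularly at an interior point of `L` and is a simple periodic loop. -/
theorem stmt12 (α a : ℝ) (hα : α ∈ Set.Ioo (Real.pi / 6) (Real.pi / 4))
    (hirr : Irrational (α / Real.pi)) (ha : 0 < a) :
    ∀ b : ℝ, b = a * Real.tan α →
    ∀ A B C D : ℂ, A = -(a : ℂ) → B = (b : ℝ) * Complex.I → C = (a : ℂ) →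
      D = -((b : ℝ) * Complex.I) →
    ∀ Rint : Set ℂ, Rint = {z : ℂ | |z.re| / a + |z.im| / b < 1} →
    ∀ r₁ r₂ : ℂ → ℂ, r₁ = reflLine A B → r₂ = reflLine (r₁ C) (r₁ D) →
    (∃ v : ℂ, ∀ z : ℂ, r₂ (r₁ z) = z + v) ∧
    ∃ t₁ t₂ : ℝ, 0 < t₁ ∧ t₁ < t₂ ∧
      (∀ t ∈ Set.Ioo 0 t₁, A + (t : ℝ) * Complex.I ∈ r₁ '' Rint) ∧
      A + (t₁ : ℝ) * Complex.I ∈ openSegment ℝ (r₁ C) (r₁ D) ∧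
      (∀ t ∈ Set.Ioo t₁ t₂, A + (t : ℝ) * Complex.I ∈ r₂ '' (r₁ '' Rint)) ∧
      A + (t₂ : ℝ) * Complex.I ∈ openSegment ℝ (r₂ (r₁ A)) (r₂ (r₁ C)) :=
  stmt12_general α a hα ha
end
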